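/- arXiv:2503.22296 — 2 statements merged into one kernel-verified Lean document; each statement's English description precedes it below -/
import Mathlib

section
/- With the notation below, for every A ∈ M̃_S one has ‖S_λ(A)‖² = −⟨Σ, A²(Π* − Π^⊥)⟩, where Σ = Σ_{i=1}^d λ_i Π_i, Π* = Σ_{i≤p} Π_i, Π^⊥ = Σ_{i>p} Π_i, and ‖·‖, ⟨·,·⟩ are the Hilbert–Schmidt norm and inner product. -/
open Matrix

/-- Hilbert–Schmidt inner product `⟨X,Y⟩ = tr(XYᵀ)`. -/
def hsInner {d : ℕ} (X Y : Matrix (Fin d) (Fin d) ℝ) : ℝ := (X * Yᵀ).trace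

lemma hsInner_apply {d : ℕ} (X Y : Matrix (Fin d) (Fin d) ℝ) :
    hsInner X Y = ∑ m, ∑ n, X m n * Y m n := by
  simp [hsInner, Matrix.trace, Matrix.mul_apply, Matrix.diag]

lemma hsInner_sum_left {d : ℕ} {ι : Type*} (s : Finset ι)
    (f : ι → Matrix (Fin d) (Fin d) ℝ) (Y : Matrix (Fin d) (Fin d) ℝ) :
    hsInner (∑ i ∈ s, f i) Y = ∑ i ∈ s, hsInner (f i) Y := by
  simp [hsInner, Matrix.sum_mul]

lemma hsInner_sum_right {d : ℕ} {ι : Type*} (s : Finset ι)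
    (f : ι → Matrix (Fin d) (Fin d) ℝ) (Y : Matrix (Fin d) (Fin d) ℝ) :
    hsInner Y (∑ i ∈ s, f i) = ∑ i ∈ s, hsInner Y (f i) := by
  simp [hsInner, Matrix.mul_sum, Matrix.transpose_sum]

lemma hsInner_smul_left {d : ℕ} (c : ℝ) (X Y : Matrix (Fin d) (Fin d) ℝ) :
    hsInner (c • X) Y = c * hsInner X Y := by
  simp [hsInner, Matrix.smul_mul]

lemma hsInner_smul_right {d : ℕ} (c : ℝ) (X Y : Matrix (Fin d) (Fin d) ℝ) :
    hsInner X (c • Y) = c * hsInner X Y := by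
  simp [hsInner, Matrix.mul_smul, Matrix.transpose_smul]

lemma hsInner_vecMulVec {d : ℕ} (a b c e : Fin d → ℝ) :
    hsInner (vecMulVec a b) (vecMulVec c e) = (a ⬝ᵥ c) * (b ⬝ᵥ e) := by
  simp only [hsInner_apply, vecMulVec_apply, dotProduct, Finset.sum_mul_sum]
  refine Finset.sum_congr rfl fun m _ => Finset.sum_congr rfl fun n _ => by ring

lemma vecMulVec_mul_vecMulVec {d : ℕ} (a b c e : Fin d → ℝ) :
    vecMulVec a b * vecMulVec c e = (b ⬝ᵥ c) • vecMulVec a e := by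
  ext m n
  simp [Matrix.mul_apply, vecMulVec_apply, dotProduct, Finset.sum_mul, Finset.mul_sum]
  exact Finset.sum_congr rfl fun k _ => by ring

lemma vecMulVec_mulVec' {d : ℕ} (a b x : Fin d → ℝ) :
    (vecMulVec a b).mulVec x = (b ⬝ᵥ x) • a := by
  ext m
  simp only [Matrix.mulVec, vecMulVec_apply, dotProduct, Pi.smul_apply, smul_eq_mul,
    Finset.sum_mul]
  exact Finset.sum_congr rfl fun k _ => by ring

lemma mul_vecMulVec' {d : ℕ} (B : Matrix (Fin d) (Fin d) ℝ) (a b : Fin d → ℝ) :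
    B * vecMulVec a b = vecMulVec (B.mulVec a) b := by
  ext m n
  simp only [Matrix.mul_apply, vecMulVec_apply, Matrix.mulVec, dotProduct, Finset.sum_mul]
  exact Finset.sum_congr rfl fun k _ => by ring

lemma trace_vecMulVec_mul {d : ℕ} (a b : Fin d → ℝ) (B : Matrix (Fin d) (Fin d) ℝ) :
    (vecMulVec a b * B).trace = b ⬝ᵥ B.mulVec a := by
  simp [Matrix.trace, Matrix.mul_apply, vecMulVec_apply, Matrix.diag, Matrix.mulVec,
    dotProduct, Finset.mul_sum]
  rw [Finset.sum_comm]
  exact Finset.sum_congr rfl fun m _ => Finset.sum_congr rfl fun n _ => by ring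

lemma sum_mulVec' {d : ℕ} {ι : Type*} (s : Finset ι)
    (M : ι → Matrix (Fin d) (Fin d) ℝ) (x : Fin d → ℝ) :
    (∑ i ∈ s, M i).mulVec x = ∑ i ∈ s, (M i).mulVec x := by
  ext m
  simp only [Matrix.mulVec, dotProduct, Finset.sum_apply, Matrix.sum_apply,
    Finset.sum_mul]
  exact Finset.sum_comm

lemma dotProduct_sum' {d : ℕ} {ι : Type*} (s : Finset ι)
    (x : Fin d → ℝ) (f : ι → (Fin d → ℝ)) :
    x ⬝ᵥ (∑ i ∈ s, f i) = ∑ i ∈ s, x ⬝ᵥ f i := by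
  simp only [dotProduct, Finset.sum_apply, Finset.mul_sum]
  exact Finset.sum_comm

/-- With `(v i)` an orthonormal basis, `Π_i = v_i v_iᵀ`, eigenvalues `λ_1 ≥ … ≥ λ_d`
with `λ_i > λ_j` for `i ≤ p < j`, `Π* = ∑_{i<p} Π_i`, `Π^⊥ = ∑_{i≥p} Π_i`,
`Σ = ∑_i λ_i Π_i`, and `S_λ(A) = ∑_{i<p≤j} √(λ_i−λ_j) Π_i A Π_j`:
for every `A ∈ M̃_S` (skew-symmetric, `A V* ⊆ V^⊥`, `A V^⊥ ⊆ V*`),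
`‖S_λ(A)‖² = −⟨Σ, A²(Π* − Π^⊥)⟩` in the Hilbert–Schmidt norm/inner product. -/
theorem hsNormSq_Slam {d p : ℕ} (hp0 : 1 ≤ p) (hpd : p < d)
    (v : Fin d → (Fin d → ℝ))
    (h_on : ∀ i j : Fin d, v i ⬝ᵥ v j = if i = j then (1 : ℝ) else 0)
    (lam : Fin d → ℝ) (hmono : Antitone lam)
    (hgap : ∀ i j : Fin d, (i : ℕ) < p → p ≤ (j : ℕ) → lam j < lam i)
    (Pi : Fin d → Matrix (Fin d) (Fin d) ℝ)
    (hPi : ∀ i, Pi i = vecMulVec (v i) (v i))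
    (Pstar Pperp Sig : Matrix (Fin d) (Fin d) ℝ)
    (hPstar : Pstar = ∑ i : Fin d, if (i : ℕ) < p then Pi i else 0)
    (hPperp : Pperp = ∑ i : Fin d, if p ≤ (i : ℕ) then Pi i else 0)
    (hSig : Sig = ∑ i : Fin d, lam i • Pi i)
    (Slam : Matrix (Fin d) (Fin d) ℝ → Matrix (Fin d) (Fin d) ℝ)
    (hSlam : ∀ A, Slam A = ∑ i : Fin d, ∑ j : Fin d,
      if (i : ℕ) < p ∧ p ≤ (j : ℕ)
        then Real.sqrt (lam i - lam j) • (Pi i * A * Pi j) else 0)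
    (A : Matrix (Fin d) (Fin d) ℝ) (hA : Aᵀ = -A)
    (hAV : ∀ x : Fin d → ℝ, Pstar.mulVec x = x → Pstar.mulVec (A.mulVec x) = 0)
    (hAVperp : ∀ x : Fin d → ℝ, Pstar.mulVec x = 0 →
      Pstar.mulVec (A.mulVec x) = A.mulVec x) :
    hsInner (Slam A) (Slam A) = -hsInner Sig (A ^ 2 * (Pstar - Pperp)) := by
  classical
  -- matrix entries of A in the basis v
  set a : Fin d → Fin d → ℝ := fun i j => v i ⬝ᵥ A.mulVec (v j) with ha
  have hAe : ∀ m n, A m n = - A n m := by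
    intro m n
    have := congrFun (congrFun hA n) m
    simpa [Matrix.transpose_apply] using this
  have hval : ∀ i j : Fin d, a i j = ∑ m, ∑ n, v i m * A m n * v j n := by
    intro i j
    simp only [ha, dotProduct, Matrix.mulVec, Finset.mul_sum]
    exact Finset.sum_congr rfl fun m _ => Finset.sum_congr rfl fun n _ => by ring
  have haskew : ∀ i j : Fin d, a i j = - a j i := by
    intro i j
    calc a i j = ∑ n, ∑ m, v i m * A m n * v j n := by rw [hval, Finset.sum_comm]
    _ = ∑ n, ∑ m, -(v j n * A n m * v i m) := by
        refine Finset.sum_congr rfl fun n _ => Finset.sum_congr rfl fun m _ => ?_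
        rw [hAe m n]; ring
    _ = - a j i := by rw [hval]; simp
  have hsq : ∀ i j : Fin d, (a i j)^2 = (a j i)^2 := by
    intro i j; rw [haskew i j]; ring
  -- skew dot product identity
  have hskewdot : ∀ x y : Fin d → ℝ, x ⬝ᵥ A.mulVec y = - (A.mulVec x ⬝ᵥ y) := by
    intro x y
    have h1 : x ⬝ᵥ A.mulVec y = ∑ m, ∑ n, x m * A m n * y n := by
      simp only [dotProduct, Matrix.mulVec, Finset.mul_sum]
      exact Finset.sum_congr rfl fun m _ => Finset.sum_congr rfl fun n _ => by ring
    have h2 : A.mulVec x ⬝ᵥ y = ∑ n, ∑ m, A n m * x m * y n := by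
      simp only [dotProduct, Matrix.mulVec, Finset.sum_mul]
    calc x ⬝ᵥ A.mulVec y = ∑ n, ∑ m, x m * A m n * y n := by rw [h1, Finset.sum_comm]
    _ = ∑ n, ∑ m, -(A n m * x m * y n) := by
        refine Finset.sum_congr rfl fun n _ => Finset.sum_congr rfl fun m _ => ?_
        rw [hAe m n]; ring
    _ = - (A.mulVec x ⬝ᵥ y) := by rw [h2]; simp
  -- completeness of the orthonormal system
  have hVVt : (Matrix.of v) * (Matrix.of v)ᵀ = (1 : Matrix (Fin d) (Fin d) ℝ) := by
    ext i j
    have := h_on i j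
    simpa [Matrix.mul_apply, Matrix.one_apply, dotProduct] using this
  have hId : (∑ k : Fin d, vecMulVec (v k) (v k)) = (1 : Matrix (Fin d) (Fin d) ℝ) := by
    have h2 := mul_eq_one_comm.mp hVVt
    ext m n
    have h3 := congrFun (congrFun h2 m) n
    simp only [Matrix.mul_apply, Matrix.transpose_apply, Matrix.of_apply] at h3
    simpa [Matrix.sum_apply, vecMulVec_apply] using h3
  -- norm expansion
  have hnorm : ∀ y : Fin d → ℝ, y ⬝ᵥ y = ∑ k, (v k ⬝ᵥ y)^2 := by
    intro y
    have h1 : y ⬝ᵥ y = y ⬝ᵥ (∑ k : Fin d, vecMulVec (v k) (v k)).mulVec y := by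
      rw [hId, Matrix.one_mulVec]
    rw [h1, sum_mulVec', dotProduct_sum']
    refine Finset.sum_congr rfl fun k _ => ?_
    rw [vecMulVec_mulVec', dotProduct_smul, dotProduct_comm]
    simp [pow_two]
  -- products of projections
  have hPiAPi : ∀ i j : Fin d, Pi i * A * Pi j = a i j • vecMulVec (v i) (v j) := by
    intro i j
    rw [hPi, hPi, mul_assoc, mul_vecMulVec', vecMulVec_mul_vecMulVec]
  -- Pstar action
  have hPstarVec : ∀ x : Fin d → ℝ,
      Pstar.mulVec x = ∑ k : Fin d, if (k : ℕ) < p then (v k ⬝ᵥ x) • v k else 0 := by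
    intro x
    rw [hPstar, sum_mulVec']
    refine Finset.sum_congr rfl fun k _ => ?_
    split_ifs with h
    · rw [hPi, vecMulVec_mulVec']
    · simp
  have hdP : ∀ (k : Fin d) (x : Fin d → ℝ),
      v k ⬝ᵥ Pstar.mulVec x = if (k : ℕ) < p then v k ⬝ᵥ x else 0 := by
    intro k x
    rw [hPstarVec, dotProduct_sum']
    have : ∀ l : Fin d, v k ⬝ᵥ (if (l : ℕ) < p then (v l ⬝ᵥ x) • v l else 0)
        = if l = k then (if (k : ℕ) < p then v k ⬝ᵥ x else 0) else 0 := by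
      intro l
      by_cases h2 : l = k
      · subst h2
        by_cases h1 : (l : ℕ) < p
        · simp [h1, dotProduct_smul, h_on l l]
        · simp [h1]
      · by_cases h1 : (l : ℕ) < p
        · simp [h1, h2, dotProduct_smul, h_on k l, Ne.symm h2]
        · simp [h1, h2]
    simp only [this]
    simp [Finset.sum_ite_eq']
  have hPstarv : ∀ i : Fin d, Pstar.mulVec (v i) = if (i : ℕ) < p then v i else 0 := by
    intro i
    rw [hPstarVec]
    have : ∀ k : Fin d, (if (k : ℕ) < p then (v k ⬝ᵥ v i) • v k else 0)
        = if k = i then (if (i : ℕ) < p then v i else 0) else 0 := by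
      intro k
      rw [h_on k i]
      by_cases h2 : k = i
      · subst h2
        by_cases h1 : (k : ℕ) < p
        · simp [h1]
        · simp [h1]
      · by_cases h1 : (k : ℕ) < p
        · simp [h1, h2]
        · simp [h1, h2]
    simp only [this]
    simp [Finset.sum_ite_eq']
  -- coordinate vanishing
  have hzero1 : ∀ i k : Fin d, (i : ℕ) < p → (k : ℕ) < p → a k i = 0 := by
    intro i k hi hk
    have h1 : Pstar.mulVec (v i) = v i := by rw [hPstarv]; simp [hi]
    have h2 := hAV (v i) h1
    have h3 := hdP k (A.mulVec (v i))
    rw [h2, if_pos hk] at h3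
    simp only [dotProduct_zero] at h3
    simpa [ha] using h3.symm
  have hzero2 : ∀ i k : Fin d, p ≤ (i : ℕ) → p ≤ (k : ℕ) → a k i = 0 := by
    intro i k hi hk
    have h1 : Pstar.mulVec (v i) = 0 := by rw [hPstarv]; simp [Nat.not_lt.mpr hi]
    have h2 := hAVperp (v i) h1
    have h3 := hdP k (A.mulVec (v i))
    rw [h2, if_neg (Nat.not_lt.mpr hk)] at h3
    simpa [ha] using h3
  -- LHS expansion
  set c : Fin d → Fin d → ℝ := fun i j =>
    if (i : ℕ) < p ∧ p ≤ (j : ℕ) then Real.sqrt (lam i - lam j) * a i j else 0 with hc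
  have hSlam' : Slam A = ∑ i : Fin d, ∑ j : Fin d, c i j • vecMulVec (v i) (v j) := by
    rw [hSlam A]
    refine Finset.sum_congr rfl fun i _ => Finset.sum_congr rfl fun j _ => ?_
    by_cases h : (i : ℕ) < p ∧ p ≤ (j : ℕ)
    · rw [if_pos h, hPiAPi, smul_smul]
      simp only [hc, if_pos h]
    · rw [if_neg h]
      simp only [hc, if_neg h, zero_smul]
  have hdiag : hsInner (Slam A) (Slam A) = ∑ i : Fin d, ∑ j : Fin d, (c i j)^2 := by
    rw [hSlam']
    simp only [hsInner_sum_left, hsInner_sum_right, hsInner_smul_left, hsInner_smul_right,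
      hsInner_vecMulVec, h_on]
    refine Finset.sum_congr rfl fun i _ => Finset.sum_congr rfl fun j _ => ?_
    simp only [mul_ite, mul_one, mul_zero, ite_mul, zero_mul, one_mul,
      Finset.sum_ite_eq, Finset.sum_ite_eq', Finset.mem_univ, if_true, Finset.mul_sum]
    simp [pow_two, Finset.sum_ite_eq, Finset.sum_ite_eq']
  -- transposes
  have hA2T : (A ^ 2)ᵀ = A ^ 2 := by
    rw [pow_two, Matrix.transpose_mul, hA, neg_mul_neg]
  have hvT : ∀ i : Fin d, (vecMulVec (v i) (v i))ᵀ = vecMulVec (v i) (v i) := by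
    intro i; ext m n; simp [vecMulVec_apply, mul_comm]
  have hPstarT : Pstarᵀ = Pstar := by
    rw [hPstar, Matrix.transpose_sum]
    refine Finset.sum_congr rfl fun i _ => ?_
    split_ifs
    · rw [hPi, hvT]
    · simp
  have hPperpT : Pperpᵀ = Pperp := by
    rw [hPperp, Matrix.transpose_sum]
    refine Finset.sum_congr rfl fun i _ => ?_
    split_ifs
    · rw [hPi, hvT]
    · simp
  have hYt : (A ^ 2 * (Pstar - Pperp))ᵀ = (Pstar - Pperp) * A ^ 2 := by
    rw [Matrix.transpose_mul, Matrix.transpose_sub, hPstarT, hPperpT, hA2T]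
  -- Pperp action
  have hPperpVec : ∀ x : Fin d → ℝ,
      Pperp.mulVec x = ∑ k : Fin d, if p ≤ (k : ℕ) then (v k ⬝ᵥ x) • v k else 0 := by
    intro x
    rw [hPperp, sum_mulVec']
    refine Finset.sum_congr rfl fun k _ => ?_
    split_ifs with h
    · rw [hPi, vecMulVec_mulVec']
    · simp
  have hdPp : ∀ (k : Fin d) (x : Fin d → ℝ),
      v k ⬝ᵥ Pperp.mulVec x = if p ≤ (k : ℕ) then v k ⬝ᵥ x else 0 := by
    intro k x
    rw [hPperpVec, dotProduct_sum']
    have : ∀ l : Fin d, v k ⬝ᵥ (if p ≤ (l : ℕ) then (v l ⬝ᵥ x) • v l else 0)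
        = if l = k then (if p ≤ (k : ℕ) then v k ⬝ᵥ x else 0) else 0 := by
      intro l
      by_cases h2 : l = k
      · subst h2
        by_cases h1 : p ≤ (l : ℕ)
        · simp [h1, dotProduct_smul, h_on l l]
        · simp [h1]
      · by_cases h1 : p ≤ (l : ℕ)
        · simp [h1, h2, dotProduct_smul, h_on k l, Ne.symm h2]
        · simp [h1, h2]
    simp only [this]
    simp [Finset.sum_ite_eq']
  have hcoord : ∀ k i : Fin d, v k ⬝ᵥ A.mulVec (v i) = a k i := fun k i => rfl
  -- trace term
  have hPiY : ∀ i : Fin d, hsInner (Pi i) (A ^ 2 * (Pstar - Pperp)) =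
      (if (i : ℕ) < p then (1:ℝ) else -1) * (- ∑ k : Fin d, (a k i)^2) := by
    intro i
    have e1 : hsInner (Pi i) (A ^ 2 * (Pstar - Pperp))
        = v i ⬝ᵥ ((Pstar - Pperp) * A ^ 2).mulVec (v i) := by
      rw [hsInner, hYt, hPi, trace_vecMulVec_mul]
    have e2 : v i ⬝ᵥ (A ^ 2).mulVec (v i) = - ∑ k : Fin d, (a k i)^2 := by
      rw [pow_two, ← Matrix.mulVec_mulVec, hskewdot, hnorm]
    rw [e1, ← Matrix.mulVec_mulVec, Matrix.sub_mulVec, dotProduct_sub, hdP, hdPp]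
    by_cases h : (i : ℕ) < p
    · rw [if_pos h, if_pos h, if_neg (by omega), e2]; ring
    · rw [if_neg h, if_neg h, if_pos (by omega), e2]; ring
  have hRHS' : -hsInner Sig (A ^ 2 * (Pstar - Pperp))
      = ∑ i : Fin d, ∑ k : Fin d, (if (i : ℕ) < p then lam i else -lam i) * (a k i)^2 := by
    rw [hSig, hsInner_sum_left, ← Finset.sum_neg_distrib]
    refine Finset.sum_congr rfl fun i _ => ?_
    rw [hsInner_smul_left, hPiY i]
    by_cases h : (i : ℕ) < p
    · rw [if_pos h, if_pos h, ← Finset.mul_sum]; ring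
    · rw [if_neg h, if_neg h, ← Finset.mul_sum]; ring
  -- final scalar identity
  rw [hdiag, hRHS']
  have key : ∀ i j : Fin d, (c i j)^2
      = (if (i : ℕ) < p ∧ p ≤ (j : ℕ) then lam i * (a j i)^2 else 0)
      + (if (i : ℕ) < p ∧ p ≤ (j : ℕ) then -(lam j * (a i j)^2) else 0) := by
    intro i j
    by_cases h : (i : ℕ) < p ∧ p ≤ (j : ℕ)
    · have hge : 0 ≤ lam i - lam j := sub_nonneg.mpr (le_of_lt (hgap i j h.1 h.2))
      simp only [hc, if_pos h]
      rw [mul_pow, Real.sq_sqrt hge, hsq i j]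
      ring
    · simp only [hc, if_neg h]
      ring
  have hsplit : ∀ i k : Fin d, (if (i : ℕ) < p then lam i else -lam i) * (a k i)^2
      = (if (i : ℕ) < p ∧ p ≤ (k : ℕ) then lam i * (a k i)^2 else 0)
      + (if (k : ℕ) < p ∧ p ≤ (i : ℕ) then -(lam i * (a k i)^2) else 0) := by
    intro i k
    by_cases hi : (i : ℕ) < p <;> by_cases hk : (k : ℕ) < p
    · rw [hzero1 i k hi hk]
      simp [hi, Nat.not_le.mpr hk, Nat.not_le.mpr hi]
    · simp [hi, hk, Nat.not_le.mpr hi, Nat.le_of_not_lt hk]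
    · simp [hi, hk, Nat.le_of_not_lt hi, Nat.not_le.mpr hk]
    · rw [hzero2 i k (Nat.le_of_not_lt hi) (Nat.le_of_not_lt hk)]
      simp [hi, hk]
  simp only [key, hsplit, Finset.sum_add_distrib]
  congr 1
  exact Finset.sum_comm
end

section
/- Let Π and Π̂ be the orthogonal projections onto the top-p eigenspaces of symmetric matrices Σ and Σ̂ = Σ + Δ, respectively, where λ_p(Σ) − λ_{p+1}(Σ) =: g > 0 and ‖Δ‖_op < g/2. Then both projections are well defined and the excess risk satisfies 0 ≤ ⟨Σ, Π − Π̂⟩ ≤ (8p(d−p)/g)·‖Δ‖_op², where ⟨X,Y⟩ = tr(XYᵀ). (A quadratic bound in ‖Δ‖_op, consistent with the k^{-1} excess-risk rate.) -/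
open Matrix

/-- The operator (spectral) norm of a real matrix. -/
noncomputable def opNorm {d : ℕ} (M : Matrix (Fin d) (Fin d) ℝ) : ℝ :=
  ‖(Matrix.toEuclideanCLM (𝕜 := ℝ) M : EuclideanSpace ℝ (Fin d) →L[ℝ] EuclideanSpace ℝ (Fin d))‖

/-!
Weyl's inequality shows that the eigengap of `Σ̂` stays open: a nonzero vector orthogonal to the
top `k - 1` eigenvectors of `Σ` and to the eigenvectors of `Σ̂` below the `k`-th exists by a
dimension count, and comparing Rayleigh quotients on it gives `λ̂_k ≤ λ_k + ‖Δ‖_op`.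

For the excess risk put `r_i = v_iᵀ Π̂ v_i ∈ [0, 1]`, so that `∑ r_i = tr Π̂ = p` and
`⟨Σ, Π - Π̂⟩ = ∑_{i ≤ p} λ_i - ∑ λ_i r_i`. Moving the mass `r` of the top `p` indices to the
bottom costs at least `g` per unit, whence `⟨Σ, Π - Π̂⟩ ≥ g ∑_{i ≤ p} (1 - r_i) = g/2 ‖Π - Π̂‖_F²`.
The same argument for `Σ̂` gives `⟨Σ̂, Π̂ - Π⟩ ≥ 0`, so
`⟨Σ, Π - Π̂⟩ ≤ -⟨Δ, Π - Π̂⟩ ≤ ‖Δ‖_F² / g + g/4 ‖Π - Π̂‖_F² ≤ ‖Δ‖_F² / g + ⟨Σ, Π - Π̂⟩ / 2`,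
i.e. `⟨Σ, Π - Π̂⟩ ≤ 2 ‖Δ‖_F² / g ≤ 2 d ‖Δ‖_op² / g`, and `2 d ≤ 8 p (d - p)`.
-/

open Finset

section Orthonormal

variable {n : Type*} [Fintype n] [DecidableEq n] {u : n → n → ℝ}

theorem of_mem_orthogonalGroup_iff :
    of u ∈ orthogonalGroup n ℝ ↔ ∀ i j, u i ⬝ᵥ u j = if i = j then 1 else 0 := by
  rw [mem_orthogonalGroup_iff, ← Matrix.ext_iff]
  simp [mul_apply, one_apply, dotProduct]

theorem trace_eq_sum_dotProduct_mulVec (hu : of u ∈ orthogonalGroup n ℝ) (X : Matrix n n ℝ) :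
    X.trace = ∑ i, u i ⬝ᵥ X *ᵥ u i := by
  calc X.trace = (X * ((of u)ᵀ * of u)).trace := by
        rw [(mem_orthogonalGroup_iff' n ℝ).mp hu, mul_one]
    _ = (of u * (X * (of u)ᵀ)).trace := by rw [← Matrix.mul_assoc, trace_mul_comm]
    _ = ∑ i, u i ⬝ᵥ X *ᵥ u i := by simp [Matrix.trace, mul_apply, dotProduct, mulVec]

theorem trace_mul_transpose_eq_sum {M : Matrix n n ℝ} {μ : n → ℝ}
    (hu : of u ∈ orthogonalGroup n ℝ) (hM : ∀ i, M *ᵥ u i = μ i • u i) (Q : Matrix n n ℝ) :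
    (M * Qᵀ).trace = ∑ i, μ i * (u i ⬝ᵥ Q *ᵥ u i) := by
  rw [trace_mul_comm, trace_eq_sum_dotProduct_mulVec hu]
  refine sum_congr rfl fun i _ => ?_
  rw [← mulVec_mulVec, hM, mulVec_smul, dotProduct_smul, smul_eq_mul, mulVec_transpose,
    dotProduct_comm, ← dotProduct_mulVec]

theorem dotProduct_mulVec_eq_sum {M : Matrix n n ℝ} {μ : n → ℝ}
    (hu : of u ∈ orthogonalGroup n ℝ) (hM : ∀ i, M *ᵥ u i = μ i • u i) (x : n → ℝ) :
    x ⬝ᵥ M *ᵥ x = ∑ i, μ i * (u i ⬝ᵥ x) ^ 2 := by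
  have := trace_mul_transpose_eq_sum hu hM (vecMulVec x x)
  rw [transpose_vecMulVec, mul_vecMulVec, trace_vecMulVec] at this
  rw [dotProduct_comm, this]
  refine sum_congr rfl fun i _ => ?_
  rw [vecMulVec_mulVec, op_smul_eq_smul, dotProduct_smul, smul_eq_mul, dotProduct_comm x, sq]

theorem sum_dotProduct_sq (hu : of u ∈ orthogonalGroup n ℝ) (x : n → ℝ) :
    ∑ i, (u i ⬝ᵥ x) ^ 2 = x ⬝ᵥ x := by
  simpa using (dotProduct_mulVec_eq_sum hu (M := 1) (μ := 1) (by simp) x).symm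

end Orthonormal

section Rayleigh

variable {n : Type*} [Fintype n] [LinearOrder n] {u : n → n → ℝ} {M : Matrix n n ℝ} {μ : n → ℝ}

theorem dotProduct_mulVec_le_of_forall_lt (hu : of u ∈ orthogonalGroup n ℝ) (hμ : Antitone μ)
    (hM : ∀ i, M *ᵥ u i = μ i • u i) {k : n} {x : n → ℝ} (hx : ∀ i < k, u i ⬝ᵥ x = 0) :
    x ⬝ᵥ M *ᵥ x ≤ μ k * (x ⬝ᵥ x) := by
  rw [dotProduct_mulVec_eq_sum hu hM, ← sum_dotProduct_sq hu, mul_sum]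
  refine sum_le_sum fun i _ => ?_
  rcases lt_or_ge i k with hik | hki
  · simp [hx i hik]
  · exact mul_le_mul_of_nonneg_right (hμ hki) (sq_nonneg _)

theorem le_dotProduct_mulVec_of_forall_gt (hu : of u ∈ orthogonalGroup n ℝ) (hμ : Antitone μ)
    (hM : ∀ i, M *ᵥ u i = μ i • u i) {k : n} {x : n → ℝ} (hx : ∀ i, k < i → u i ⬝ᵥ x = 0) :
    μ k * (x ⬝ᵥ x) ≤ x ⬝ᵥ M *ᵥ x := by
  rw [dotProduct_mulVec_eq_sum hu hM, ← sum_dotProduct_sq hu, mul_sum]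
  refine sum_le_sum fun i _ => ?_
  rcases lt_or_ge k i with hki | hik
  · simp [hx i hki]
  · exact mul_le_mul_of_nonneg_right (hμ hik) (sq_nonneg _)

end Rayleigh

theorem exists_ne_zero_forall_dotProduct_eq_zero {ι n : Type*} [Fintype n] (s : Finset ι)
    (c : ι → n → ℝ) (hs : #s < Fintype.card n) : ∃ x ≠ 0, ∀ i ∈ s, c i ⬝ᵥ x = 0 := by
  let f := mulVecLin (of fun i : s => c i)
  have hker : LinearMap.ker f ≠ ⊥ :=
    LinearMap.ker_ne_bot_of_finrank_lt (by simpa using hs)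
  obtain ⟨x, hx, hx0⟩ := (Submodule.ne_bot_iff _).mp hker
  exact ⟨x, hx0, fun i hi => congrFun (LinearMap.mem_ker.mp hx) ⟨i, hi⟩⟩

section OpNorm

variable {d : ℕ}

theorem dotProduct_self_eq_norm_sq (x : Fin d → ℝ) : x ⬝ᵥ x = ‖WithLp.toLp 2 x‖ ^ 2 := by
  rw [← real_inner_self_eq_norm_sq, EuclideanSpace.inner_toLp_toLp, star_trivial]

theorem opNorm_neg (M : Matrix (Fin d) (Fin d) ℝ) : opNorm (-M) = opNorm M := by
  simp [opNorm]

theorem norm_toLp_mulVec_le (M : Matrix (Fin d) (Fin d) ℝ) (x : Fin d → ℝ) :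
    ‖WithLp.toLp 2 (M *ᵥ x)‖ ≤ opNorm M * ‖WithLp.toLp 2 x‖ := by
  rw [← toEuclideanCLM_toLp]
  exact ContinuousLinearMap.le_opNorm _ _

theorem dotProduct_mulVec_le_opNorm_mul (M : Matrix (Fin d) (Fin d) ℝ) (x : Fin d → ℝ) :
    x ⬝ᵥ M *ᵥ x ≤ opNorm M * (x ⬝ᵥ x) := by
  calc x ⬝ᵥ M *ᵥ x = inner ℝ (WithLp.toLp 2 x) (WithLp.toLp 2 (M *ᵥ x)) := by
        rw [EuclideanSpace.inner_toLp_toLp, star_trivial, dotProduct_comm]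
    _ ≤ ‖WithLp.toLp 2 x‖ * (opNorm M * ‖WithLp.toLp 2 x‖) :=
        (real_inner_le_norm _ _).trans (by gcongr; exact norm_toLp_mulVec_le M x)
    _ = opNorm M * (x ⬝ᵥ x) := by rw [dotProduct_self_eq_norm_sq]; ring

theorem hsInner_self_le_mul_opNorm_sq (M : Matrix (Fin d) (Fin d) ℝ) :
    hsInner M M ≤ d * opNorm M ^ 2 := by
  have hcol : ∀ j, ∑ i, M i j ^ 2 ≤ opNorm M ^ 2 := fun j => by
    have := norm_toLp_mulVec_le M (Pi.single j 1)
    rw [PiLp.toLp_single, PiLp.norm_single, norm_one, mul_one] at this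
    calc ∑ i, M i j ^ 2 = ‖WithLp.toLp 2 (M *ᵥ Pi.single j 1)‖ ^ 2 := by
          rw [← dotProduct_self_eq_norm_sq, mulVec_single_one]; simp [dotProduct, sq]
      _ ≤ opNorm M ^ 2 := by gcongr
  calc hsInner M M = ∑ j, ∑ i, M i j ^ 2 := by
        simp only [hsInner, trace, Matrix.diag, mul_apply, transpose_apply, sq]
        exact sum_comm
    _ ≤ ∑ _j : Fin d, opNorm M ^ 2 := sum_le_sum fun j _ => hcol j
    _ = d * opNorm M ^ 2 := by simp

theorem eigenvalue_le_add_opNorm {A B : Matrix (Fin d) (Fin d) ℝ} {u w : Fin d → Fin d → ℝ}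
    {μ ν : Fin d → ℝ} (hu : of u ∈ orthogonalGroup (Fin d) ℝ)
    (hw : of w ∈ orthogonalGroup (Fin d) ℝ)
    (hμ : Antitone μ) (hν : Antitone ν) (hA : ∀ i, A *ᵥ u i = μ i • u i)
    (hB : ∀ i, B *ᵥ w i = ν i • w i) (k : Fin d) : ν k ≤ μ k + opNorm (B - A) := by
  obtain ⟨x, hx0, hx⟩ := exists_ne_zero_forall_dotProduct_eq_zero (univ.erase k)
    (fun i => if i < k then u i else w i) (by simpa [card_erase_of_mem] using k.pos)
  have hxu : ∀ i < k, u i ⬝ᵥ x = 0 := fun i hi => by simpa [hi] using hx i (by simp [hi.ne])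
  have hxw : ∀ i, k < i → w i ⬝ᵥ x = 0 := fun i hi => by
    simpa [hi.not_gt] using hx i (by simp [hi.ne'])
  have hpos : 0 < x ⬝ᵥ x := by
    simpa using dotProduct_self_star_pos_iff.mpr hx0
  refine le_of_mul_le_mul_right ?_ hpos
  calc ν k * (x ⬝ᵥ x) ≤ x ⬝ᵥ B *ᵥ x := le_dotProduct_mulVec_of_forall_gt hw hν hB hxw
    _ = x ⬝ᵥ A *ᵥ x + x ⬝ᵥ (B - A) *ᵥ x := by rw [sub_mulVec, dotProduct_sub]; ring
    _ ≤ μ k * (x ⬝ᵥ x) + opNorm (B - A) * (x ⬝ᵥ x) :=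
        add_le_add (dotProduct_mulVec_le_of_forall_lt hu hμ hA hxu)
          (dotProduct_mulVec_le_opNorm_mul _ x)
    _ = (μ k + opNorm (B - A)) * (x ⬝ᵥ x) := by ring

end OpNorm

theorem sub_mul_sum_one_sub_le {ι : Type*} [Fintype ι] [DecidableEq ι] (s : Finset ι)
    {μ r : ι → ℝ} {α β : ℝ} (hα : ∀ i ∈ s, α ≤ μ i) (hβ : ∀ i ∉ s, μ i ≤ β)
    (hr0 : ∀ i, 0 ≤ r i) (hr1 : ∀ i, r i ≤ 1) (hr : ∑ i, r i = #s) :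
    (α - β) * ∑ i ∈ s, (1 - r i) ≤ ∑ i ∈ s, μ i - ∑ i, μ i * r i := by
  have hin : α * ∑ i ∈ s, (1 - r i) ≤ ∑ i ∈ s, μ i * (1 - r i) := by
    rw [mul_sum]
    exact sum_le_sum fun i hi => mul_le_mul_of_nonneg_right (hα i hi) (sub_nonneg.mpr (hr1 i))
  have hout : ∑ i ∈ sᶜ, μ i * r i ≤ β * ∑ i ∈ sᶜ, r i := by
    rw [mul_sum]
    exact sum_le_sum fun i hi => mul_le_mul_of_nonneg_right (hβ i (mem_compl.mp hi)) (hr0 i)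
  have hmass : ∑ i ∈ sᶜ, r i = ∑ i ∈ s, (1 - r i) := by
    rw [sum_sub_distrib, sum_const, nsmul_one, ← hr, ← sum_add_sum_compl s r]
    ring
  have hexpand : ∑ i ∈ s, μ i * (1 - r i) = ∑ i ∈ s, μ i - ∑ i ∈ s, μ i * r i := by
    simp only [mul_sub, mul_one, sum_sub_distrib]
  rw [hmass] at hout
  rw [sub_mul, ← sum_add_sum_compl s (fun i => μ i * r i)]
  linarith

section SpanProj

variable {n : Type*} [Fintype n] {u : n → n → ℝ}

def spanProj (u : n → n → ℝ) (s : Finset n) : Matrix n n ℝ := ∑ i ∈ s, vecMulVec (u i) (u i)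

theorem spanProj_mulVec (s : Finset n) (x : n → ℝ) :
    spanProj u s *ᵥ x = ∑ i ∈ s, (u i ⬝ᵥ x) • u i := by
  simp [spanProj, sum_mulVec, vecMulVec_mulVec]

theorem dotProduct_spanProj_mulVec (s : Finset n) (x : n → ℝ) :
    x ⬝ᵥ spanProj u s *ᵥ x = ∑ i ∈ s, (u i ⬝ᵥ x) ^ 2 := by
  rw [spanProj_mulVec, dotProduct_sum]
  refine sum_congr rfl fun i _ => ?_
  rw [dotProduct_smul, smul_eq_mul, dotProduct_comm x, sq]

theorem spanProj_mulVec_self [DecidableEq n] (hu : of u ∈ orthogonalGroup n ℝ) (s : Finset n)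
    (j : n) :
    spanProj u s *ᵥ u j = (if j ∈ s then (1 : ℝ) else 0) • u j := by
  simp [spanProj_mulVec, of_mem_orthogonalGroup_iff.mp hu]

theorem trace_spanProj [DecidableEq n] (hu : of u ∈ orthogonalGroup n ℝ) (s : Finset n) :
    (spanProj u s).trace = #s := by
  simp [spanProj, trace_sum, trace_vecMulVec, of_mem_orthogonalGroup_iff.mp hu]

theorem dotProduct_spanProj_mulVec_le [DecidableEq n] (hu : of u ∈ orthogonalGroup n ℝ)
    (s : Finset n) (x : n → ℝ) : x ⬝ᵥ spanProj u s *ᵥ x ≤ x ⬝ᵥ x := by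
  rw [dotProduct_spanProj_mulVec, ← sum_dotProduct_sq hu]
  exact sum_le_sum_of_subset_of_nonneg (subset_univ s) fun i _ _ => sq_nonneg _

theorem trace_spanProj_mul_transpose [DecidableEq n] (hu : of u ∈ orthogonalGroup n ℝ)
    (s : Finset n) (Q : Matrix n n ℝ) : (spanProj u s * Qᵀ).trace = ∑ i ∈ s, u i ⬝ᵥ Q *ᵥ u i := by
  rw [trace_mul_transpose_eq_sum hu (spanProj_mulVec_self hu s)]
  simp [ite_mul, sum_ite_mem]

end SpanProj

theorem sum_ite_val_lt_eq_spanProj {d p : ℕ} (hpd : p < d) (u : Fin d → Fin d → ℝ) :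
    (∑ i : Fin d, if (i : ℕ) < p then vecMulVec (u i) (u i) else 0)
      = spanProj u (Iio ⟨p, hpd⟩) := by
  rw [spanProj, ← sum_filter]
  congr 1
  ext i
  simp [Fin.lt_def]

section HilbertSchmidt

variable {d : ℕ}

theorem hsInner_eq_vec_dotProduct (X Y : Matrix (Fin d) (Fin d) ℝ) :
    hsInner X Y = vec X ⬝ᵥ vec Y := by
  rw [vec_dotProduct_vec, hsInner, trace_mul_comm, ← trace_transpose, transpose_mul,
    transpose_transpose]

theorem hsInner_self_nonneg (X : Matrix (Fin d) (Fin d) ℝ) : 0 ≤ hsInner X X := by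
  rw [hsInner_eq_vec_dotProduct]
  exact sum_nonneg fun i _ => mul_self_nonneg _

theorem neg_two_mul_hsInner_le (X Y : Matrix (Fin d) (Fin d) ℝ) (c : ℝ) :
    -(2 * c * hsInner X Y) ≤ hsInner X X + c ^ 2 * hsInner Y Y := by
  have := hsInner_self_nonneg (X + c • Y)
  simp only [hsInner_eq_vec_dotProduct, vec_add, vec_smul, add_dotProduct, dotProduct_add,
    smul_dotProduct, dotProduct_smul, smul_eq_mul, dotProduct_comm (vec Y)] at this ⊢
  linarith

theorem hsInner_sub_left (X Y Z : Matrix (Fin d) (Fin d) ℝ) :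
    hsInner (X - Y) Z = hsInner X Z - hsInner Y Z := by
  simp [hsInner, sub_mul]

theorem hsInner_sub_right (X Y Z : Matrix (Fin d) (Fin d) ℝ) :
    hsInner X (Y - Z) = hsInner X Y - hsInner X Z := by
  simp [hsInner, transpose_sub, mul_sub]

theorem hsInner_spanProj_sub {M Q : Matrix (Fin d) (Fin d) ℝ} {v : Fin d → Fin d → ℝ}
    {μ : Fin d → ℝ} (hv : of v ∈ orthogonalGroup (Fin d) ℝ) (hM : ∀ i, M *ᵥ v i = μ i • v i)
    (s : Finset (Fin d)) :
    hsInner M (spanProj v s - Q) = ∑ i ∈ s, μ i - ∑ i, μ i * (v i ⬝ᵥ Q *ᵥ v i) := by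
  rw [hsInner_sub_right]
  simp [hsInner, trace_mul_transpose_eq_sum hv hM,
    spanProj_mulVec_self hv, ite_smul, apply_ite (dotProduct (v _)),
    of_mem_orthogonalGroup_iff.mp hv]

theorem hsInner_spanProj_self {u : Fin d → Fin d → ℝ} (hu : of u ∈ orthogonalGroup (Fin d) ℝ)
    (s : Finset (Fin d)) : hsInner (spanProj u s) (spanProj u s) = #s := by
  calc hsInner (spanProj u s) (spanProj u s) = ∑ _i ∈ s, (1 : ℝ) :=
        (trace_spanProj_mul_transpose hu s _).trans <| sum_congr rfl fun i hi => by
          simp [spanProj_mulVec_self hu, hi, of_mem_orthogonalGroup_iff.mp hu]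
    _ = #s := by simp

theorem hsInner_comm (P Q : Matrix (Fin d) (Fin d) ℝ) : hsInner P Q = hsInner Q P := by
  rw [hsInner_eq_vec_dotProduct, hsInner_eq_vec_dotProduct, dotProduct_comm]

theorem hsInner_self_spanProj_sub_spanProj {v w : Fin d → Fin d → ℝ}
    (hv : of v ∈ orthogonalGroup (Fin d) ℝ) (hw : of w ∈ orthogonalGroup (Fin d) ℝ)
    (s : Finset (Fin d)) :
    hsInner (spanProj v s - spanProj w s) (spanProj v s - spanProj w s)
      = 2 * ∑ i ∈ s, (1 - v i ⬝ᵥ spanProj w s *ᵥ v i) := by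
  have hvw : hsInner (spanProj v s) (spanProj w s) = ∑ i ∈ s, v i ⬝ᵥ spanProj w s *ᵥ v i :=
    trace_spanProj_mul_transpose hv s _
  rw [hsInner_sub_right, hsInner_sub_left, hsInner_sub_left, hsInner_comm (spanProj w s),
    hsInner_spanProj_self hv, hsInner_spanProj_self hw, hvw, sum_sub_distrib, sum_const, nsmul_one]
  ring

theorem le_hsInner_spanProj_sub_spanProj {M : Matrix (Fin d) (Fin d) ℝ}
    {v w : Fin d → Fin d → ℝ} {μ : Fin d → ℝ} (hv : of v ∈ orthogonalGroup (Fin d) ℝ)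
    (hw : of w ∈ orthogonalGroup (Fin d) ℝ) (hM : ∀ i, M *ᵥ v i = μ i • v i)
    (s : Finset (Fin d)) {α β : ℝ} (hα : ∀ i ∈ s, α ≤ μ i) (hβ : ∀ i ∉ s, μ i ≤ β) :
    (α - β) / 2 * hsInner (spanProj v s - spanProj w s) (spanProj v s - spanProj w s)
      ≤ hsInner M (spanProj v s - spanProj w s) := by
  set r := fun i => v i ⬝ᵥ spanProj w s *ᵥ v i
  have hr0 : ∀ i, 0 ≤ r i := fun i => by
    simpa only [r, dotProduct_spanProj_mulVec] using sum_nonneg fun j _ => sq_nonneg _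
  have hr1 : ∀ i, r i ≤ 1 := fun i => by
    simpa [of_mem_orthogonalGroup_iff.mp hv] using dotProduct_spanProj_mulVec_le hw s (v i)
  have hr : ∑ i, r i = #s := by rw [← trace_spanProj hw s, trace_eq_sum_dotProduct_mulVec hv]
  calc (α - β) / 2 * hsInner (spanProj v s - spanProj w s) (spanProj v s - spanProj w s)
        = (α - β) * ∑ i ∈ s, (1 - r i) := by
          rw [hsInner_self_spanProj_sub_spanProj hv hw]; ring
    _ ≤ ∑ i ∈ s, μ i - ∑ i, μ i * r i :=
        sub_mul_sum_one_sub_le s hα hβ hr0 hr1 hr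
    _ = hsInner M (spanProj v s - spanProj w s) := (hsInner_spanProj_sub hv hM s).symm

theorem le_hsInner_spanProj_Iio_sub_spanProj_Iio {M : Matrix (Fin d) (Fin d) ℝ}
    {v w : Fin d → Fin d → ℝ} {μ : Fin d → ℝ} (hv : of v ∈ orthogonalGroup (Fin d) ℝ)
    (hw : of w ∈ orthogonalGroup (Fin d) ℝ) (hμ : Antitone μ) (hM : ∀ i, M *ᵥ v i = μ i • v i)
    {k' k : Fin d} (hk : ∀ i < k, i ≤ k') :
    (μ k' - μ k) / 2 * hsInner (spanProj v (Iio k) - spanProj w (Iio k))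
        (spanProj v (Iio k) - spanProj w (Iio k))
      ≤ hsInner M (spanProj v (Iio k) - spanProj w (Iio k)) :=
  le_hsInner_spanProj_sub_spanProj hv hw hM (Iio k) (fun i hi => hμ (hk i (mem_Iio.mp hi)))
    fun i hi => hμ (not_lt.mp (by simpa using hi))

end HilbertSchmidt

/-- Let `Π`, `Π̂` be the orthogonal projections onto the top-`p` eigenspaces of the
symmetric matrices `Σ` and `Σ̂ = Σ + Δ`, where the eigengap `g = λ_p(Σ) − λ_{p+1}(Σ)` is
positive and `‖Δ‖_op < g/2`.  Then the top-`p` eigenspace of `Σ̂` is well defined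
(`λ̂_p > λ̂_{p+1}`) and the excess risk satisfies
`0 ≤ ⟨Σ, Π − Π̂⟩ ≤ (8 p (d−p)/g)·‖Δ‖_op²`. -/
theorem excess_risk_quadratic_bound {d p : ℕ} (hp0 : 0 < p) (hpd : p < d)
    (Sig Delta : Matrix (Fin d) (Fin d) ℝ)
    (lam lamHat : Fin d → ℝ) (hmono : Antitone lam) (hmonoHat : Antitone lamHat)
    (v w : Fin d → (Fin d → ℝ))
    (h_on_v : ∀ i j : Fin d, v i ⬝ᵥ v j = if i = j then (1 : ℝ) else 0)
    (h_on_w : ∀ i j : Fin d, w i ⬝ᵥ w j = if i = j then (1 : ℝ) else 0)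
    (heig : ∀ i, Sig.mulVec (v i) = lam i • v i)
    (heigHat : ∀ i, (Sig + Delta).mulVec (w i) = lamHat i • w i)
    (g : ℝ) (hg : g = lam ⟨p - 1, by omega⟩ - lam ⟨p, hpd⟩) (hgpos : 0 < g)
    (hDeltaSmall : opNorm Delta < g / 2)
    (P PHat : Matrix (Fin d) (Fin d) ℝ)
    (hP : P = ∑ i : Fin d, if (i : ℕ) < p then vecMulVec (v i) (v i) else 0)
    (hPHat : PHat = ∑ i : Fin d, if (i : ℕ) < p then vecMulVec (w i) (w i) else 0) :
    lamHat ⟨p, hpd⟩ < lamHat ⟨p - 1, by omega⟩ ∧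
    0 ≤ hsInner Sig (P - PHat) ∧
    hsInner Sig (P - PHat)
      ≤ 8 * (p : ℝ) * ((d : ℝ) - (p : ℝ)) / g * opNorm Delta ^ 2 := by
  have hv := of_mem_orthogonalGroup_iff.mpr h_on_v
  have hw := of_mem_orthogonalGroup_iff.mpr h_on_w
  set k : Fin d := ⟨p, hpd⟩
  set k' : Fin d := ⟨p - 1, by omega⟩
  have hk : ∀ i, i < k → i ≤ k' := fun i hi => by
    simp only [k, k', Fin.lt_def, Fin.le_def] at hi ⊢; omega
  rw [sum_ite_val_lt_eq_spanProj hpd] at hP hPHat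
  have hweyl : lamHat k ≤ lam k + opNorm Delta := by
    simpa using eigenvalue_le_add_opNorm hv hw hmono hmonoHat heig heigHat k
  have hweyl' : lam k' ≤ lamHat k' + opNorm Delta := by
    simpa [opNorm_neg] using eigenvalue_le_add_opNorm hw hv hmonoHat hmono heigHat heig k'
  have hgap : g / 2 * hsInner (P - PHat) (P - PHat) ≤ hsInner Sig (P - PHat) := by
    rw [hP, hPHat, hg]
    exact le_hsInner_spanProj_Iio_sub_spanProj_Iio hv hw hmono heig hk
  have hHat : 0 ≤ hsInner (Sig + Delta) (PHat - P) := by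
    simpa [hP, hPHat] using
      le_hsInner_spanProj_Iio_sub_spanProj_Iio hw hv hmonoHat heigHat (k' := k) fun _ => le_of_lt
  have hsplit : hsInner Sig (P - PHat) + hsInner Delta (P - PHat)
      = -hsInner (Sig + Delta) (PHat - P) := by
    simp only [hsInner, transpose_sub, add_mul, mul_sub, trace_add, trace_sub]; ring
  have hrisk : g / 2 * hsInner Sig (P - PHat) ≤ hsInner Delta Delta := by
    nlinarith [neg_two_mul_hsInner_le Delta (P - PHat) (g / 2)]
  have hdp : 2 * (d : ℝ) ≤ 8 * p * (d - p) := by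
    have : (1 : ℝ) ≤ p := by exact_mod_cast hp0
    have : (p : ℝ) + 1 ≤ d := by exact_mod_cast hpd
    nlinarith
  refine ⟨by linarith, (mul_nonneg (by positivity) (hsInner_self_nonneg _)).trans hgap, ?_⟩
  rw [div_mul_eq_mul_div, le_div_iff₀ hgpos]
  nlinarith [hsInner_self_le_mul_opNorm_sq Delta, sq_nonneg (opNorm Delta)]
end
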